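/- Let (W, ≤, R, V) be a model whose frame is forward confluent, s ∈ W, and B a formula. If s ⊨ ◇B, then there exists t ∈ W with s R t and t ⊨ B. -/
import Mathlib


inductive Fml : Type
  | atom : ℕ → Fml
  | impl : Fml → Fml → Fml
  | top : Fml
  | bot : Fml
  | and : Fml → Fml → Fml
  | or : Fml → Fml → Fml
  | box : Fml → Fml
  | dia : Fml → Fml
deriving DecidableEq

/-- number of constructors (symbols) in a formula -/
def Fml.len : Fml → ℕ
  | atom _ => 1
  | impl A B => A.len + B.len + 1
  | top => 1
  | bot => 1
  | and A B => A.len + B.len + 1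
  | or A B => A.len + B.len + 1
  | box A => A.len + 1
  | dia A => A.len + 1

/-- a set of formulas is closed under immediate subformulas -/
def ClosedSet (S : Set Fml) : Prop :=
  (∀ A B, Fml.impl A B ∈ S → A ∈ S ∧ B ∈ S) ∧
  (∀ A B, Fml.and A B ∈ S → A ∈ S ∧ B ∈ S) ∧
  (∀ A B, Fml.or A B ∈ S → A ∈ S ∧ B ∈ S) ∧
  (∀ A, Fml.box A ∈ S → A ∈ S) ∧
  (∀ A, Fml.dia A ∈ S → A ∈ S)

/-- Σ_A : the least closed set of formulas containing A -/
def Sig (A : Fml) : Set Fml := ⋂₀ {S | ClosedSet S ∧ A ∈ S}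

/-- Γ° = ⋃ {Σ_B : □B ∈ Γ or ◇B ∈ Γ} -/
def circSet (Γ : Set Fml) : Set Fml :=
  ⋃ B ∈ {B : Fml | Fml.box B ∈ Γ ∨ Fml.dia B ∈ Γ}, Sig B

/-- iterates Γ^α : Γ^0 = Γ, Γ^{α+1} = (Γ^α)° -/
def iterCirc (Γ : Set Fml) : ℕ → Set Fml
  | 0 => Γ
  | n + 1 => circSet (iterCirc Γ n)

/-- intuitionistic modal satisfaction (the paper's clauses) -/
def Sat {W : Type} (le R : W → W → Prop) (V : ℕ → W → Prop) : Fml → W → Prop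
  | .atom p, s => V p s
  | .impl A B, s => ∀ t, le s t → Sat le R V A t → Sat le R V B t
  | .top, _ => True
  | .bot, _ => False
  | .and A B, s => Sat le R V A s ∧ Sat le R V B s
  | .or A B, s => Sat le R V A s ∨ Sat le R V B s
  | .box A, s => ∀ t, le s t → ∀ u, R t u → Sat le R V A u
  | .dia A, s => ∃ t, le t s ∧ ∃ u, R t u ∧ Sat le R V A u

/-- le is a preorder -/
def IsPre {W : Type} (le : W → W → Prop) : Prop :=
  (∀ s, le s s) ∧ (∀ s t u, le s t → le t u → le s u)

/-- each V p is ≤-closed -/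
def VClosed {W : Type} (le : W → W → Prop) (V : ℕ → W → Prop) : Prop :=
  ∀ p s t, V p s → le s t → V p t

def FwdConf {W : Type} (le R : W → W → Prop) : Prop :=
  ∀ s t u, le t s → R t u → ∃ v, R s v ∧ le u v

def DownConf {W : Type} (le R : W → W → Prop) : Prop :=
  ∀ s t u, le s t → R t u → ∃ v, R s v ∧ le v u

def UpConf {W : Type} (le R : W → W → Prop) : Prop :=
  ∀ s t u, R s t → le u t → ∃ v, le v s ∧ R v u

/-- validity in a frame: true at all worlds under all valuations -/
def ValidIn {W : Type} (le R : W → W → Prop) (A : Fml) : Prop :=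
  ∀ V : ℕ → W → Prop, VClosed le V → ∀ s, Sat le R V A s

lemma heredity {W : Type} (le R : W → W → Prop) (V : ℕ → W → Prop)
    (hpre : IsPre le) (hV : VClosed le V) :
    ∀ (A : Fml) (s t : W), Sat le R V A s → le s t → Sat le R V A t := by
  intro A
  induction A with
  | atom p => intro s t h hst; exact hV p s t h hst
  | impl A B ihA ihB =>
    intro s t h hst u htu hAu
    exact h u (hpre.2 s t u hst htu) hAu
  | top => intro s t h hst; trivial
  | bot => intro s t h hst; exact h
  | and A B ihA ihB => intro s t h hst; exact ⟨ihA s t h.1 hst, ihB s t h.2 hst⟩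
  | or A B ihA ihB =>
    intro s t h hst
    cases h with
    | inl h => exact Or.inl (ihA s t h hst)
    | inr h => exact Or.inr (ihB s t h hst)
  | box A ih =>
    intro s t h hst u htu v huv
    exact h u (hpre.2 s t u hst htu) v huv
  | dia A ih =>
    intro s t h hst
    obtain ⟨x, hxs, u, hxu, hu⟩ := h
    exact ⟨x, hpre.2 x s t hxs hst, u, hxu, hu⟩

theorem dia_successor {W : Type} (le R : W → W → Prop) (V : ℕ → W → Prop)
    (hpre : IsPre le) (hV : VClosed le V) (hfc : FwdConf le R)
    (s : W) (B : Fml) (h : Sat le R V (Fml.dia B) s) :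
    ∃ t, R s t ∧ Sat le R V B t := by
  obtain ⟨x, hxs, u, hxu, hu⟩ := h
  obtain ⟨v, hsv, huv⟩ := hfc s x u hxs hxu
  exact ⟨v, hsv, heredity le R V hpre hV B u v hu huv⟩
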